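/- Let f be twice differentiable with M-Lipschitz Hessian, and consider the damped Newton step p = −(H_est + λ_N I)^{-1} g where g = ∇f(w), H_est is symmetric positive semidefinite and λ_N > 0. With α = ‖I − ∇²f(w)(H_est + λ_N I)^{-1}‖ (operator norm), the post-step gradient satisfies ‖∇f(w + p)‖ ≤ α‖g‖ + (M/2)‖(H_est + λ_N I)^{-1}‖² ‖g‖². -/

import Mathlib

/-!
Write `H = ∇²f(w)`. Splitting `∇f(w + p) = (g + H p) + (∇f(w + p) - ∇f(w) - H p)`, the first term
is `(I - H K) g`, of norm at most `α ‖g‖`, and the second is the first-order Taylor remainder of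
`∇f`, which a Lipschitz derivative bounds by `(M / 2) ‖p‖² ≤ (M / 2) ‖K‖² ‖g‖²`.
-/

open RealInnerProductSpace ContinuousLinearMap Set

theorem ContDiff.differentiable_gradient {F : Type*} [NormedAddCommGroup F]
    [InnerProductSpace ℝ F] [CompleteSpace F] {f : F → ℝ} (hf : ContDiff ℝ 2 f) :
    Differentiable ℝ (gradient f) :=
  ((InnerProductSpace.toDual ℝ F).symm.contDiff.comp
    (hf.fderiv_right (m := 1) (by norm_num))).differentiable one_ne_zero

section TaylorRemainder

variable {E F : Type*} [NormedAddCommGroup E] [NormedSpace ℝ E]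
  [NormedAddCommGroup F] [NormedSpace ℝ F]

theorem norm_le_half_of_norm_deriv_le_mul {φ φ' : ℝ → F} {C : ℝ} (h0 : φ 0 = 0)
    (hφ : ∀ t, HasDerivAt φ (φ' t) t) (hbound : ∀ t ∈ Ico (0 : ℝ) 1, ‖φ' t‖ ≤ C * t) :
    ‖φ 1‖ ≤ C / 2 := by
  have hB : ∀ t : ℝ, HasDerivAt (fun t => C / 2 * t ^ 2) (C * t) t := fun t =>
    ((hasDerivAt_pow 2 t).const_mul (C / 2)).congr_deriv (by norm_num; ring)
  simpa using image_norm_le_of_norm_deriv_right_le_deriv_boundary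
    (fun t _ => (hφ t).continuousAt.continuousWithinAt) (fun t _ => (hφ t).hasDerivWithinAt)
    (by simp [h0]) hB hbound (right_mem_Icc.2 zero_le_one)

theorem norm_sub_sub_fderiv_le_of_norm_fderiv_sub_le {G : E → F} (hG : Differentiable ℝ G)
    {M : ℝ} {w : E} (hM : ∀ x, ‖fderiv ℝ G x - fderiv ℝ G w‖ ≤ M * ‖x - w‖) (p : E) :
    ‖G (w + p) - G w - fderiv ℝ G w p‖ ≤ M / 2 * ‖p‖ ^ 2 := by
  set H := fderiv ℝ G w
  have hline : ∀ t : ℝ, HasDerivAt (fun t : ℝ => w + t • p) p t := fun t => by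
    simpa using ((hasDerivAt_id t).smul_const p).const_add w
  have hφ : ∀ t : ℝ, HasDerivAt (fun t : ℝ => G (w + t • p) - G w - t • H p)
      (fderiv ℝ G (w + t • p) p - H p) t := fun t => by
    have := (((hG _).hasFDerivAt.comp_hasDerivAt t (hline t)).sub_const (G w)).sub
      ((hasDerivAt_id t).smul_const (H p))
    rwa [one_smul] at this
  have hbound : ∀ t ∈ Ico (0 : ℝ) 1, ‖fderiv ℝ G (w + t • p) p - H p‖ ≤ M * ‖p‖ ^ 2 * t := by
    intro t ht
    have hlip : ‖fderiv ℝ G (w + t • p) - H‖ ≤ M * (t * ‖p‖) := by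
      simpa [norm_smul, abs_of_nonneg ht.1] using hM (w + t • p)
    calc ‖fderiv ℝ G (w + t • p) p - H p‖ = ‖(fderiv ℝ G (w + t • p) - H) p‖ := rfl
      _ ≤ ‖fderiv ℝ G (w + t • p) - H‖ * ‖p‖ := le_opNorm _ _
      _ ≤ M * (t * ‖p‖) * ‖p‖ := by gcongr
      _ = M * ‖p‖ ^ 2 * t := by ring
  simpa [mul_div_right_comm] using norm_le_half_of_norm_deriv_le_mul (by simp) hφ hbound

end TaylorRemainder

theorem nonneg_of_forall_norm_sub_le_mul {E X : Type*} [NormedAddCommGroup E] [Nontrivial E]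
    [SeminormedAddCommGroup X] {F : E → X} {M : ℝ} (h : ∀ u v, ‖F u - F v‖ ≤ M * ‖u - v‖) :
    0 ≤ M := by
  obtain ⟨u, v, huv⟩ := exists_pair_ne E
  exact nonneg_of_mul_nonneg_left ((norm_nonneg _).trans (h u v))
    (norm_pos_iff.2 (sub_ne_zero.2 huv))

theorem damped_newton_post_step_gradient_general
    {d : ℕ} (f : EuclideanSpace ℝ (Fin d) → ℝ)
    (hf : ContDiff ℝ 2 f) (M : ℝ)
    (hHess : ∀ u v : EuclideanSpace ℝ (Fin d),
      ‖fderiv ℝ (gradient f) u - fderiv ℝ (gradient f) v‖ ≤ M * ‖u - v‖)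
    (K : EuclideanSpace ℝ (Fin d) →L[ℝ] EuclideanSpace ℝ (Fin d))
    (w : EuclideanSpace ℝ (Fin d))
    (g p : EuclideanSpace ℝ (Fin d)) (hg : g = gradient f w) (hp : p = -(K g))
    (α : ℝ)
    (hα : α = ‖ContinuousLinearMap.id ℝ (EuclideanSpace ℝ (Fin d)) -
      (fderiv ℝ (gradient f) w).comp K‖) :
    ‖gradient f (w + p)‖ ≤ α * ‖g‖ + M / 2 * ‖K‖ ^ 2 * ‖g‖ ^ 2 := by
  rcases subsingleton_or_nontrivial (EuclideanSpace ℝ (Fin d)) with _ | _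
  · simp [Subsingleton.elim g 0, Subsingleton.elim (gradient f (w + p)) 0]
  set H := fderiv ℝ (gradient f) w
  have hM : 0 ≤ M := nonneg_of_forall_norm_sub_le_mul hHess
  have hlin : ‖g + H p‖ ≤ α * ‖g‖ := by
    have : g + H p = (ContinuousLinearMap.id ℝ (EuclideanSpace ℝ (Fin d)) - H.comp K) g := by
      simp [hp, sub_eq_add_neg]
    exact this ▸ hα ▸ le_opNorm _ _
  have hrem := norm_sub_sub_fderiv_le_of_norm_fderiv_sub_le hf.differentiable_gradient
    (fun x => hHess x w) p
  have hpK : ‖p‖ ≤ ‖K‖ * ‖g‖ := by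
    rw [hp, norm_neg]
    exact le_opNorm K g
  calc ‖gradient f (w + p)‖ = ‖(g + H p) + (gradient f (w + p) - gradient f w - H p)‖ := by
        rw [hg]; abel_nf
    _ ≤ α * ‖g‖ + M / 2 * ‖p‖ ^ 2 := (norm_add_le _ _).trans (add_le_add hlin hrem)
    _ ≤ α * ‖g‖ + M / 2 * (‖K‖ * ‖g‖) ^ 2 := by gcongr
    _ = α * ‖g‖ + M / 2 * ‖K‖ ^ 2 * ‖g‖ ^ 2 := by ring

theorem damped_newton_post_step_gradient
    {d : ℕ} (f : EuclideanSpace ℝ (Fin d) → ℝ)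
    (hf : ContDiff ℝ 2 f) (M : ℝ)
    (hHess : ∀ u v : EuclideanSpace ℝ (Fin d),
      ‖fderiv ℝ (gradient f) u - fderiv ℝ (gradient f) v‖ ≤ M * ‖u - v‖)
    (Hest : EuclideanSpace ℝ (Fin d) →L[ℝ] EuclideanSpace ℝ (Fin d))
    (hsym : IsSelfAdjoint Hest)
    (hpsd : ∀ v : EuclideanSpace ℝ (Fin d), 0 ≤ ⟪v, Hest v⟫)
    (lamN : ℝ) (hlam : 0 < lamN)
    (K : EuclideanSpace ℝ (Fin d) →L[ℝ] EuclideanSpace ℝ (Fin d))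
    (hK₁ : (Hest + lamN • (ContinuousLinearMap.id ℝ (EuclideanSpace ℝ (Fin d)))).comp K =
      ContinuousLinearMap.id ℝ (EuclideanSpace ℝ (Fin d)))
    (hK₂ : K.comp (Hest + lamN • (ContinuousLinearMap.id ℝ (EuclideanSpace ℝ (Fin d)))) =
      ContinuousLinearMap.id ℝ (EuclideanSpace ℝ (Fin d)))
    (w : EuclideanSpace ℝ (Fin d))
    (g p : EuclideanSpace ℝ (Fin d)) (hg : g = gradient f w) (hp : p = -(K g))
    (α : ℝ)
    (hα : α = ‖ContinuousLinearMap.id ℝ (EuclideanSpace ℝ (Fin d)) -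
      (fderiv ℝ (gradient f) w).comp K‖) :
    ‖gradient f (w + p)‖ ≤ α * ‖g‖ + M / 2 * ‖K‖ ^ 2 * ‖g‖ ^ 2 :=
  damped_newton_post_step_gradient_general f hf M hHess K w g p hg hp α hα
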